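/- arXiv:2303.10695 — 3 statements merged into one kernel-verified Lean document; each statement's English description precedes it below -/
import Mathlib

section
/- Let f_1,…,f_n : ℝ^d → ℝ be L-smooth with average f = (1/n)∑_i f_i, and suppose the bounded client dissimilarity condition (1/n)∑_{i=1}^n ‖∇f_i(x) − ∇f(x)‖² ≤ B² holds for every x ∈ ℝ^d. Then for any points x_1,…,x_n ∈ ℝ^d with average x̄ = (1/n)∑_i x_i: ∑_{i=1}^n ‖(1/n)∑_{j=1}^n ∇f_j(x_j) − ∇f_i(x_i)‖² ≤ 6L²·∑_{i=1}^n ‖x_i − x̄‖² + 4nB². -/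
open MeasureTheory ProbabilityTheory Finset
open scoped RealInnerProductSpace

/-- Average of `n` vectors in `ℝ^d`. -/
noncomputable def avgVec {n d : ℕ} (x : Fin n → EuclideanSpace ℝ (Fin d)) :
    EuclideanSpace ℝ (Fin d) :=
  (n : ℝ)⁻¹ • ∑ i, x i

/-- The global objective `f = (1/n) ∑ f i`. -/
noncomputable def avgFun {n d : ℕ} (f : Fin n → EuclideanSpace ℝ (Fin d) → ℝ)
    (x : EuclideanSpace ℝ (Fin d)) : ℝ :=
  (n : ℝ)⁻¹ * ∑ i, f i x

/-- Consensus error `(1/n) ∑ ‖x i - x̄‖²`. -/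
noncomputable def consensusError {n d : ℕ} (x : Fin n → EuclideanSpace ℝ (Fin d)) : ℝ :=
  (n : ℝ)⁻¹ * ∑ i, ‖x i - avgVec x‖ ^ 2

/-- The mean minimizes the sum of squared distances. -/
lemma variance_min {E : Type*} [NormedAddCommGroup E] [InnerProductSpace ℝ E]
    {n : ℕ} (hn : 0 < n) (v : Fin n → E) (c : E) :
    ∑ i, ‖(n : ℝ)⁻¹ • ∑ j, v j - v i‖ ^ 2 ≤ ∑ i, ‖v i - c‖ ^ 2 := by
  set m : E := (n : ℝ)⁻¹ • ∑ j, v j with hm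
  have hnm : (n : ℝ) • m = ∑ j, v j := by
    rw [hm, smul_smul, mul_inv_cancel₀ (by exact_mod_cast hn.ne'), one_smul]
  have hcross : ∑ i, ⟪v i - m, m - c⟫ = 0 := by
    rw [← sum_inner]
    have : ∑ i, (v i - m) = 0 := by
      rw [Finset.sum_sub_distrib, Finset.sum_const, Finset.card_univ, Fintype.card_fin,
        ← hnm, (Nat.cast_smul_eq_nsmul ℝ n m).symm, sub_self]
    rw [this, inner_zero_left]
  have hdecomp : ∑ i, ‖v i - c‖ ^ 2
      = ∑ i, ‖v i - m‖ ^ 2 + (n : ℝ) * ‖m - c‖ ^ 2 := by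
    have : ∀ i, ‖v i - c‖ ^ 2 = ‖v i - m‖ ^ 2 + 2 * ⟪v i - m, m - c⟫ + ‖m - c‖ ^ 2 := by
      intro i
      have : v i - c = (v i - m) + (m - c) := by abel
      rw [this, norm_add_sq_real]
    rw [Finset.sum_congr rfl fun i _ => this i]
    rw [Finset.sum_add_distrib, Finset.sum_add_distrib, ← Finset.mul_sum, hcross,
      Finset.sum_const, Finset.card_univ, Fintype.card_fin, nsmul_eq_mul]
    ring
  have h1 : ∑ i, ‖m - v i‖ ^ 2 = ∑ i, ‖v i - m‖ ^ 2 := by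
    simp [norm_sub_rev]
  calc ∑ i, ‖m - v i‖ ^ 2 = ∑ i, ‖v i - m‖ ^ 2 := h1
    _ ≤ ∑ i, ‖v i - m‖ ^ 2 + (n : ℝ) * ‖m - c‖ ^ 2 := le_add_of_nonneg_right (by positivity)
    _ = ∑ i, ‖v i - c‖ ^ 2 := hdecomp.symm

theorem grad_dispersion_bound
    {n d : ℕ} (hn : 1 ≤ n) (hd : 1 ≤ d)
    (L : ℝ) (hL : 0 < L)
    (f : Fin n → EuclideanSpace ℝ (Fin d) → ℝ)
    (hdiff : ∀ i, Differentiable ℝ (f i))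
    (hsmooth : ∀ i x y, ‖gradient (f i) x - gradient (f i) y‖ ≤ L * ‖x - y‖)
    (B : ℝ) (hB : 0 ≤ B)
    (hBCD : ∀ x, (n : ℝ)⁻¹ * ∑ i, ‖gradient (f i) x - gradient (avgFun f) x‖ ^ 2 ≤ B ^ 2)
    (x : Fin n → EuclideanSpace ℝ (Fin d)) :
    ∑ i, ‖(n : ℝ)⁻¹ • ∑ j, gradient (f j) (x j) - gradient (f i) (x i)‖ ^ 2
      ≤ 6 * L ^ 2 * ∑ i, ‖x i - avgVec x‖ ^ 2 + 4 * n * B ^ 2 := by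
  have hn0 : (0 : ℝ) < n := by exact_mod_cast hn
  set xb := avgVec x with hxb
  set c := gradient (avgFun f) xb with hc
  set g : Fin n → EuclideanSpace ℝ (Fin d) := fun i => gradient (f i) (x i) with hg
  have step1 : ∑ i, ‖(n : ℝ)⁻¹ • ∑ j, g j - g i‖ ^ 2 ≤ ∑ i, ‖g i - c‖ ^ 2 :=
    variance_min (by omega) g c
  -- pointwise bound: ‖g i - c‖² ≤ 2 L² ‖x i - xb‖² + 2 ‖∇f_i(xb) - c‖²
  have step2 : ∀ i, ‖g i - c‖ ^ 2
      ≤ 2 * L ^ 2 * ‖x i - xb‖ ^ 2 + 2 * ‖gradient (f i) xb - c‖ ^ 2 := by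
    intro i
    have htri : ‖g i - c‖ ≤ ‖g i - gradient (f i) xb‖ + ‖gradient (f i) xb - c‖ :=
      norm_sub_le_norm_sub_add_norm_sub _ _ _
    have hs : ‖g i - gradient (f i) xb‖ ≤ L * ‖x i - xb‖ := hsmooth i (x i) xb
    have h1 : (0 : ℝ) ≤ ‖g i - c‖ := norm_nonneg _
    have h2 : (0 : ℝ) ≤ ‖gradient (f i) xb - c‖ := norm_nonneg _
    have h3 : (0 : ℝ) ≤ ‖g i - gradient (f i) xb‖ := norm_nonneg _
    nlinarith [norm_nonneg (x i - xb), hL.le, mul_le_mul htri htri h1 (by positivity),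
      mul_le_mul hs hs h3 (by positivity),
      sq_nonneg (‖g i - gradient (f i) xb‖ - ‖gradient (f i) xb - c‖)]
  have hBCDn : ∑ i, ‖gradient (f i) xb - c‖ ^ 2 ≤ n * B ^ 2 := by
    have := hBCD xb
    rw [← hc] at this
    calc ∑ i, ‖gradient (f i) xb - c‖ ^ 2
        = (n : ℝ) * ((n : ℝ)⁻¹ * ∑ i, ‖gradient (f i) xb - c‖ ^ 2) := by
          field_simp
      _ ≤ (n : ℝ) * B ^ 2 := by
          exact mul_le_mul_of_nonneg_left this hn0.le
  have step3 : ∑ i, ‖g i - c‖ ^ 2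
      ≤ 2 * L ^ 2 * ∑ i, ‖x i - xb‖ ^ 2 + 2 * n * B ^ 2 := by
    calc ∑ i, ‖g i - c‖ ^ 2
        ≤ ∑ i, ((2 * L ^ 2) * ‖x i - xb‖ ^ 2 + 2 * ‖gradient (f i) xb - c‖ ^ 2) :=
          Finset.sum_le_sum fun i _ => step2 i
      _ = 2 * L ^ 2 * ∑ i, ‖x i - xb‖ ^ 2 + 2 * ∑ i, ‖gradient (f i) xb - c‖ ^ 2 := by
          rw [Finset.sum_add_distrib, ← Finset.mul_sum, ← Finset.mul_sum]
      _ ≤ 2 * L ^ 2 * ∑ i, ‖x i - xb‖ ^ 2 + 2 * (n * B ^ 2) := by linarith [hBCDn]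
      _ = 2 * L ^ 2 * ∑ i, ‖x i - xb‖ ^ 2 + 2 * n * B ^ 2 := by ring
  have hsum_nonneg : (0 : ℝ) ≤ ∑ i, ‖x i - xb‖ ^ 2 := by positivity
  have : ∑ i, ‖(n : ℝ)⁻¹ • ∑ j, g j - g i‖ ^ 2
      ≤ 6 * L ^ 2 * ∑ i, ‖x i - xb‖ ^ 2 + 4 * n * B ^ 2 := by
    nlinarith [sq_nonneg L, sq_nonneg B, hn0.le]
  exact this
end

section
/- For FedNDL2, the gradient deviation after the noisy gossip step satisfies, for every round t: E‖∇f(X̄_t) − (1/n)∑_{i=1}^n ∇f_i(x_{t+1/2}^i)‖² ≤ 2L²(1 − ρ)·E[(C.E)_t] + (2L²/n)·∑_{i=1}^n D_{t,i}², where x_{t+1/2}^i = ∑_{j=1}^n w_{ij}(X_t^j + δ_t^j). -/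
open MeasureTheory ProbabilityTheory Finset
open scoped RealInnerProductSpace

/-!
Pointwise, the deviation is the average of `∇f_i(x̄) - ∇f_i(x_{t+1/2}^i)`, so by Jensen and
`L`-smoothness its square is at most `L²/n · ∑_i ‖x̄ - x_{t+1/2}^i‖²`. Since the rows of `W` sum to
one, `x̄ - x_{t+1/2}^i` splits into the mixed disagreement `∑_j w_ij (x̄ - X^j)`, which the
contraction of `W` controls, and the mixed noise `∑_j w_ij δ^j`. In expectation the cross terms
of the noise vanish by independence and zero mean, so `E‖∑_j w_ij δ^j‖² = ∑_j w_ij² D_j²`, and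
`w_ij² ≤ w_ij` with unit column sums bounds the sum over `i` by `∑_j D_j²`.
-/

section Deterministic

theorem norm_sub_sq_le_two_mul {E : Type*} [SeminormedAddCommGroup E] (a b : E) :
    ‖a - b‖ ^ 2 ≤ 2 * (‖a‖ ^ 2 + ‖b‖ ^ 2) :=
  (pow_le_pow_left₀ (norm_nonneg _) (norm_sub_le a b) 2).trans add_sq_le

theorem norm_inv_smul_sum_sq_le {E : Type*} [SeminormedAddCommGroup E] [NormedSpace ℝ E]
    {n : ℕ} (v : Fin n → E) :
    ‖(n : ℝ)⁻¹ • ∑ i, v i‖ ^ 2 ≤ (n : ℝ)⁻¹ * ∑ i, ‖v i‖ ^ 2 := by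
  rcases Nat.eq_zero_or_pos n with rfl | hn
  · simp
  have hjensen : ‖∑ i, v i‖ ^ 2 ≤ n * ∑ i, ‖v i‖ ^ 2 := by
    calc ‖∑ i, v i‖ ^ 2 ≤ (∑ i, ‖v i‖) ^ 2 := pow_le_pow_left₀ (norm_nonneg _) (norm_sum_le _ _) 2
      _ ≤ n * ∑ i, ‖v i‖ ^ 2 := by simpa using sq_sum_le_card_mul_sum_sq (s := univ) (f := (‖v ·‖))
  calc ‖(n : ℝ)⁻¹ • ∑ i, v i‖ ^ 2 = (n : ℝ)⁻¹ ^ 2 * ‖∑ i, v i‖ ^ 2 := by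
        rw [norm_smul, mul_pow, Real.norm_of_nonneg (by positivity)]
    _ ≤ (n : ℝ)⁻¹ ^ 2 * (n * ∑ i, ‖v i‖ ^ 2) := by gcongr
    _ = (n : ℝ)⁻¹ * ∑ i, ‖v i‖ ^ 2 := by
        rw [sq, mul_assoc, inv_mul_cancel_left₀ (by positivity)]

theorem sub_sum_smul_add_eq {M ι : Type*} [AddCommGroup M] [Module ℝ M] [Fintype ι]
    (w : ι → ℝ) (hw : ∑ j, w j = 1) (c : M) (x δ : ι → M) :
    c - ∑ j, w j • (x j + δ j) = ∑ j, w j • (c - x j) - ∑ j, w j • δ j := by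
  conv_lhs => rw [← one_smul ℝ c, ← hw, sum_smul]
  simp only [smul_sub, smul_add, sum_sub_distrib, sum_add_distrib]
  abel

theorem sum_norm_sub_gossip_sq_le {E : Type*} [SeminormedAddCommGroup E] [NormedSpace ℝ E]
    {ι : Type*} [Fintype ι] (w : ι → ι → ℝ) (hwrow : ∀ i, ∑ j, w i j = 1) (ρ : ℝ) (c : E)
    (x δ : ι → E)
    (hcontract : ∑ i, ‖∑ j, w i j • (c - x j)‖ ^ 2 ≤ (1 - ρ) * ∑ i, ‖c - x i‖ ^ 2) :
    ∑ i, ‖c - ∑ j, w i j • (x j + δ j)‖ ^ 2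
      ≤ 2 * ((1 - ρ) * ∑ i, ‖c - x i‖ ^ 2 + ∑ i, ‖∑ j, w i j • δ j‖ ^ 2) := by
  calc ∑ i, ‖c - ∑ j, w i j • (x j + δ j)‖ ^ 2
      ≤ ∑ i, 2 * (‖∑ j, w i j • (c - x j)‖ ^ 2 + ‖∑ j, w i j • δ j‖ ^ 2) := by
        gcongr with i
        rw [sub_sum_smul_add_eq (w i) (hwrow i)]
        exact norm_sub_sq_le_two_mul _ _
    _ = 2 * (∑ i, ‖∑ j, w i j • (c - x j)‖ ^ 2 + ∑ i, ‖∑ j, w i j • δ j‖ ^ 2) := by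
        rw [← mul_sum, sum_add_distrib]
    _ ≤ _ := by gcongr

variable {n d : ℕ}

theorem gradient_avgFun (f : Fin n → EuclideanSpace ℝ (Fin d) → ℝ)
    (x : EuclideanSpace ℝ (Fin d)) (hf : ∀ i, DifferentiableAt ℝ (f i) x) :
    gradient (avgFun f) x = (n : ℝ)⁻¹ • ∑ i, gradient (f i) x := by
  unfold avgFun gradient
  rw [fderiv_const_mul (DifferentiableAt.fun_sum fun i _ => hf i),
    fderiv_fun_sum fun i _ => hf i]
  simp [map_sum]

theorem norm_gradient_avgFun_sub_sq_le (f : Fin n → EuclideanSpace ℝ (Fin d) → ℝ)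
    (hdiff : ∀ i, Differentiable ℝ (f i)) (L : ℝ)
    (hsmooth : ∀ i x y, ‖gradient (f i) x - gradient (f i) y‖ ≤ L * ‖x - y‖)
    (c : EuclideanSpace ℝ (Fin d)) (y : Fin n → EuclideanSpace ℝ (Fin d)) :
    ‖gradient (avgFun f) c - (n : ℝ)⁻¹ • ∑ i, gradient (f i) (y i)‖ ^ 2
      ≤ L ^ 2 * ((n : ℝ)⁻¹ * ∑ i, ‖c - y i‖ ^ 2) := by
  rw [gradient_avgFun f c fun i => (hdiff i).differentiableAt, ← smul_sub, ← sum_sub_distrib]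
  calc _ ≤ (n : ℝ)⁻¹ * ∑ i, ‖gradient (f i) c - gradient (f i) (y i)‖ ^ 2 :=
        norm_inv_smul_sum_sq_le _
    _ ≤ (n : ℝ)⁻¹ * ∑ i, (L * ‖c - y i‖) ^ 2 := by
        gcongr with i
        exact hsmooth i c (y i)
    _ = _ := by simp only [mul_pow, ← mul_sum]; ring

theorem norm_gradient_deviation_after_gossip_le (f : Fin n → EuclideanSpace ℝ (Fin d) → ℝ)
    (hdiff : ∀ i, Differentiable ℝ (f i)) (L : ℝ)
    (hsmooth : ∀ i x y, ‖gradient (f i) x - gradient (f i) y‖ ≤ L * ‖x - y‖)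
    (w : Fin n → Fin n → ℝ) (hwrow : ∀ i, ∑ j, w i j = 1) (ρ : ℝ)
    (x δ : Fin n → EuclideanSpace ℝ (Fin d))
    (hcontract : ∑ i, ‖∑ j, w i j • (avgVec x - x j)‖ ^ 2
      ≤ (1 - ρ) * ∑ i, ‖avgVec x - x i‖ ^ 2) :
    ‖gradient (avgFun f) (avgVec x)
        - (n : ℝ)⁻¹ • ∑ i, gradient (f i) (∑ j, w i j • (x j + δ j))‖ ^ 2
      ≤ 2 * L ^ 2 * (1 - ρ) * consensusError x
        + 2 * L ^ 2 / n * ∑ i, ‖∑ j, w i j • δ j‖ ^ 2 := by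
  have hCE : consensusError x = (n : ℝ)⁻¹ * ∑ i, ‖avgVec x - x i‖ ^ 2 := by
    simp only [consensusError, norm_sub_rev]
  have hmix := sum_norm_sub_gossip_sq_le w hwrow ρ (avgVec x) x δ hcontract
  calc _ ≤ L ^ 2 * ((n : ℝ)⁻¹ * ∑ i, ‖avgVec x - ∑ j, w i j • (x j + δ j)‖ ^ 2) :=
        norm_gradient_avgFun_sub_sq_le f hdiff L hsmooth _ _
    _ ≤ L ^ 2 * ((n : ℝ)⁻¹ *
          (2 * ((1 - ρ) * ∑ i, ‖avgVec x - x i‖ ^ 2 + ∑ i, ‖∑ j, w i j • δ j‖ ^ 2))) := by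
        gcongr
    _ = _ := by rw [hCE]; ring

end Deterministic

section Noise

theorem norm_sum_smul_sq_eq_sum_sum_inner {E ι : Type*} [NormedAddCommGroup E]
    [InnerProductSpace ℝ E] [Fintype ι] (a : ι → ℝ) (v : ι → E) :
    ‖∑ i, a i • v i‖ ^ 2 = ∑ i, ∑ j, a i * a j * ⟪v i, v j⟫ := by
  rw [← real_inner_self_eq_norm_sq, sum_inner]
  simp only [inner_sum, real_inner_smul_left, real_inner_smul_right]
  exact sum_congr rfl fun i _ => sum_congr rfl fun j _ => by ring

variable {Ω E ι : Type*} [MeasurableSpace Ω] {μ : Measure Ω}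
  [NormedAddCommGroup E] [InnerProductSpace ℝ E]
  [MeasurableSpace E] [BorelSpace E] {Δ : ι → Ω → E}

theorem integrable_inner_of_pairwise_indepFun (hindep : Pairwise fun i j => Δ i ⟂ᵢ[μ] Δ j)
    (hint : ∀ i, Integrable (Δ i) μ) (hsq : ∀ i, Integrable (fun ω => ‖Δ i ω‖ ^ 2) μ) (i j : ι) :
    Integrable (fun ω => ⟪Δ i ω, Δ j ω⟫) μ := by
  rcases eq_or_ne i j with rfl | hij
  · simpa only [real_inner_self_eq_norm_sq] using hsq i
  · exact (hindep hij).integrable_bilin (hint i) (hint j) (innerSL ℝ)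

theorem integral_inner_eq_zero_of_indepFun [CompleteSpace E] {i j : ι} (hij : Δ i ⟂ᵢ[μ] Δ j)
    (hint : ∀ i, Integrable (Δ i) μ) (hmean : ∀ i, ∫ ω, Δ i ω ∂μ = 0) :
    ∫ ω, ⟪Δ i ω, Δ j ω⟫ ∂μ = 0 := by
  have h := hij.integral_bilin (hint i) (hint j) (innerSL ℝ)
  rwa [hmean, map_zero, zero_apply] at h

variable [Fintype ι]

theorem integrable_norm_sum_smul_sq (hindep : Pairwise fun i j => Δ i ⟂ᵢ[μ] Δ j)
    (hint : ∀ i, Integrable (Δ i) μ) (hsq : ∀ i, Integrable (fun ω => ‖Δ i ω‖ ^ 2) μ)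
    (a : ι → ℝ) : Integrable (fun ω => ‖∑ i, a i • Δ i ω‖ ^ 2) μ := by
  simp only [norm_sum_smul_sq_eq_sum_sum_inner]
  exact integrable_finsetSum _ fun i _ => integrable_finsetSum _ fun j _ =>
    (integrable_inner_of_pairwise_indepFun hindep hint hsq i j).const_mul _

theorem integral_norm_sum_smul_sq [CompleteSpace E] (hindep : Pairwise fun i j => Δ i ⟂ᵢ[μ] Δ j)
    (hint : ∀ i, Integrable (Δ i) μ) (hmean : ∀ i, ∫ ω, Δ i ω ∂μ = 0)
    (hsq : ∀ i, Integrable (fun ω => ‖Δ i ω‖ ^ 2) μ) (a : ι → ℝ) :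
    ∫ ω, ‖∑ i, a i • Δ i ω‖ ^ 2 ∂μ = ∑ i, a i ^ 2 * ∫ ω, ‖Δ i ω‖ ^ 2 ∂μ := by
  have hinner := integrable_inner_of_pairwise_indepFun hindep hint hsq
  simp only [norm_sum_smul_sq_eq_sum_sum_inner]
  rw [integral_finsetSum _ fun i _ => integrable_finsetSum _ fun j _ => (hinner i j).const_mul _]
  refine sum_congr rfl fun i _ => ?_
  rw [integral_finsetSum _ fun j _ => (hinner i j).const_mul _, sum_eq_single i]
  · simp only [integral_const_mul, real_inner_self_eq_norm_sq, sq]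
  · intro j _ hji
    rw [integral_const_mul, integral_inner_eq_zero_of_indepFun (hindep hji.symm) hint hmean,
      mul_zero]
  · simp

end Noise

theorem sum_sum_sq_mul_le_sum {ι κ : Type*} [Fintype ι] [Fintype κ] (w : ι → κ → ℝ)
    (hw01 : ∀ i j, w i j ∈ Set.Icc (0 : ℝ) 1) (hwcol : ∀ j, ∑ i, w i j = 1) (c : κ → ℝ)
    (hc : ∀ j, 0 ≤ c j) :
    ∑ i, ∑ j, w i j ^ 2 * c j ≤ ∑ j, c j := by
  calc ∑ i, ∑ j, w i j ^ 2 * c j ≤ ∑ i, ∑ j, w i j * c j := by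
        gcongr with i _ j
        · exact hc j
        · obtain ⟨h0, h1⟩ := hw01 i j
          nlinarith
    _ = ∑ j, c j := by
        rw [sum_comm]
        simp only [← sum_mul, hwcol, one_mul]

theorem fedndl2_grad_deviation_after_gossip_general
    {n d : ℕ}
    {Ω : Type*} [m0 : MeasurableSpace Ω] (μ : Measure Ω)
    (L : ℝ)
    (f : Fin n → EuclideanSpace ℝ (Fin d) → ℝ)
    (hdiff : ∀ i, Differentiable ℝ (f i))
    (hsmooth : ∀ i x y, ‖gradient (f i) x - gradient (f i) y‖ ≤ L * ‖x - y‖)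
    (w : Fin n → Fin n → ℝ)
    (hw01 : ∀ i j, w i j ∈ Set.Icc (0:ℝ) 1)
    (hwrow : ∀ i, ∑ j, w i j = 1)
    (hwcol : ∀ j, ∑ i, w i j = 1)
    (ρ : ℝ)
    (hwcontract : ∀ Y : Fin n → EuclideanSpace ℝ (Fin d),
      ∑ i, ‖∑ j, w i j • (avgVec Y - Y j)‖ ^ 2 ≤ (1 - ρ) * ∑ i, ‖avgVec Y - Y i‖ ^ 2)
    (X Δ : Fin n → Ω → EuclideanSpace ℝ (Fin d))
    (D : Fin n → ℝ)
    (hΔ_int : ∀ i, Integrable (Δ i) μ)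
    (hΔ_mean : ∀ i, ∫ ω, Δ i ω ∂μ = 0)
    (hΔ_sq_int : ∀ i, Integrable (fun ω => ‖Δ i ω‖ ^ 2) μ)
    (hΔ_var : ∀ i, ∫ ω, ‖Δ i ω‖ ^ 2 ∂μ = D i ^ 2)
    (hΔ_indep : iIndepFun Δ μ)
    (hCE_int : Integrable (fun ω => consensusError (fun i => X i ω)) μ)
    (hLHS_int : Integrable (fun ω =>
      ‖gradient (avgFun f) (avgVec (fun i => X i ω))
        - (n : ℝ)⁻¹ • ∑ i, gradient (f i) (∑ j, w i j • (X j ω + Δ j ω))‖ ^ 2) μ) :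
    ∫ ω, ‖gradient (avgFun f) (avgVec (fun i => X i ω))
        - (n : ℝ)⁻¹ • ∑ i, gradient (f i) (∑ j, w i j • (X j ω + Δ j ω))‖ ^ 2 ∂μ
      ≤ 2 * L ^ 2 * (1 - ρ) * ∫ ω, consensusError (fun i => X i ω) ∂μ
        + 2 * L ^ 2 / n * ∑ i, D i ^ 2 := by
  have hindep : Pairwise fun i j => Δ i ⟂ᵢ[μ] Δ j := fun i j hij => hΔ_indep.indepFun hij
  have hnoise_int i := integrable_norm_sum_smul_sq hindep hΔ_int hΔ_sq_int (w i)
  have hnoise i : ∫ ω, ‖∑ j, w i j • Δ j ω‖ ^ 2 ∂μ = ∑ j, w i j ^ 2 * D j ^ 2 := by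
    simp only [integral_norm_sum_smul_sq hindep hΔ_int hΔ_mean hΔ_sq_int, hΔ_var]
  have hnoise_sum_int := integrable_finsetSum univ fun i _ => hnoise_int i
  have hbound_int := (hCE_int.const_mul (2 * L ^ 2 * (1 - ρ))).add
    (hnoise_sum_int.const_mul (2 * L ^ 2 / n))
  calc _ ≤ ∫ ω, (2 * L ^ 2 * (1 - ρ) * consensusError (fun i => X i ω)
          + 2 * L ^ 2 / n * ∑ i, ‖∑ j, w i j • Δ j ω‖ ^ 2) ∂μ :=
        integral_mono hLHS_int hbound_int fun ω =>
          norm_gradient_deviation_after_gossip_le f hdiff L hsmooth w hwrow ρ (X · ω) (Δ · ω)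
            (hwcontract (X · ω))
    _ = 2 * L ^ 2 * (1 - ρ) * ∫ ω, consensusError (fun i => X i ω) ∂μ
          + 2 * L ^ 2 / n * ∑ i, ∑ j, w i j ^ 2 * D j ^ 2 := by
        rw [integral_add (hCE_int.const_mul _) (hnoise_sum_int.const_mul _), integral_const_mul,
          integral_const_mul, integral_finsetSum _ fun i _ => hnoise_int i]
        simp only [hnoise]
    _ ≤ _ := by
        have := sum_sum_sq_mul_le_sum w hw01 hwcol (D · ^ 2) fun j => sq_nonneg _
        gcongr

theorem fedndl2_grad_deviation_after_gossip
    {n d : ℕ} (hn : 1 ≤ n) (hd : 1 ≤ d)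
    {Ω : Type*} [m0 : MeasurableSpace Ω] (μ : Measure Ω) [IsProbabilityMeasure μ]
    (L : ℝ) (hL : 0 < L)
    (f : Fin n → EuclideanSpace ℝ (Fin d) → ℝ)
    (hdiff : ∀ i, Differentiable ℝ (f i))
    (hsmooth : ∀ i x y, ‖gradient (f i) x - gradient (f i) y‖ ≤ L * ‖x - y‖)
    (w : Fin n → Fin n → ℝ)
    (hw01 : ∀ i j, w i j ∈ Set.Icc (0:ℝ) 1)
    (hwsymm : ∀ i j, w i j = w j i)
    (hwrow : ∀ i, ∑ j, w i j = 1)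
    (hwcol : ∀ j, ∑ i, w i j = 1)
    (ρ : ℝ) (hρ : ρ ∈ Set.Ioc (0:ℝ) 1)
    (hwcontract : ∀ Y : Fin n → EuclideanSpace ℝ (Fin d),
      ∑ i, ‖∑ j, w i j • (avgVec Y - Y j)‖ ^ 2 ≤ (1 - ρ) * ∑ i, ‖avgVec Y - Y i‖ ^ 2)
    (X Δ : Fin n → Ω → EuclideanSpace ℝ (Fin d))
    (hXmeas : ∀ i, Measurable (X i))
    (D : Fin n → ℝ)
    (hΔmeas : ∀ i, Measurable (Δ i))
    (hΔ_int : ∀ i, Integrable (Δ i) μ)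
    (hΔ_mean : ∀ i, ∫ ω, Δ i ω ∂μ = 0)
    (hΔ_sq_int : ∀ i, Integrable (fun ω => ‖Δ i ω‖ ^ 2) μ)
    (hΔ_var : ∀ i, ∫ ω, ‖Δ i ω‖ ^ 2 ∂μ = D i ^ 2)
    (hΔ_indep : iIndepFun Δ μ)
    (hΔ_indep_X : IndepFun (fun ω i => Δ i ω) (fun ω i => X i ω) μ)
    (hCE_int : Integrable (fun ω => consensusError (fun i => X i ω)) μ)
    (hLHS_int : Integrable (fun ω =>
      ‖gradient (avgFun f) (avgVec (fun i => X i ω))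
        - (n : ℝ)⁻¹ • ∑ i, gradient (f i) (∑ j, w i j • (X j ω + Δ j ω))‖ ^ 2) μ) :
    ∫ ω, ‖gradient (avgFun f) (avgVec (fun i => X i ω))
        - (n : ℝ)⁻¹ • ∑ i, gradient (f i) (∑ j, w i j • (X j ω + Δ j ω))‖ ^ 2 ∂μ
      ≤ 2 * L ^ 2 * (1 - ρ) * ∫ ω, consensusError (fun i => X i ω) ∂μ
        + 2 * L ^ 2 / n * ∑ i, D i ^ 2 :=
  fedndl2_grad_deviation_after_gossip_general (m0 := m0) μ L f hdiff hsmooth w hw01 hwrow hwcol ρ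
    hwcontract X Δ D hΔ_int hΔ_mean hΔ_sq_int hΔ_var hΔ_indep hCE_int hLHS_int
end

section
/- Let f_1,…,f_n : ℝ^d → ℝ be L-smooth with average f, satisfying the bounded client dissimilarity condition with constant B, and let ρ ∈ (0,1] and η > 0. For any points x_1,…,x_n ∈ ℝ^d with average x̄, let X ∈ ℝ^{d×n} have columns x_i, X̄ have all columns equal to x̄, ∇ ∈ ℝ^{d×n} have columns ∇f_i(x_i), and ∇̄ have all columns equal to (1/n)∑_j ∇f_j(x_j). Then ((1 − ρ)/n)·‖(X̄ − X) − η(∇̄ − ∇)‖_F² ≤ (1/n)·[(1 − ρ/2) + 12L²η²/ρ]·‖X̄ − X‖_F² + 8η²B²/ρ. -/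
open MeasureTheory ProbabilityTheory Finset
open scoped RealInnerProductSpace

/-!
Write `aᵢ = x̄ - xᵢ` and `bᵢ = ḡ - gᵢ` with `gᵢ = ∇fᵢ(xᵢ)` and `ḡ` their mean. Young's inequality
with weight `ρ/2` splits `‖aᵢ - η bᵢ‖²`, and the factor `1 - ρ` absorbs the constants:
`(1 - ρ)(1 + ρ/2) ≤ 1 - ρ/2` and `(1 - ρ)(1 + 2/ρ) ≤ 2/ρ`. Since the mean minimises the sum of
squared deviations, `∑ ‖bᵢ‖² ≤ ∑ ‖gᵢ - ∇f(x̄)‖²`; each term is split at `∇fᵢ(x̄)`, the first part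
controlled by `L`-smoothness through `‖aᵢ‖` and the second by the dissimilarity bound `B`.
-/

section Young

variable {E : Type*} [SeminormedAddCommGroup E]

theorem norm_add_sq_le_young {ε : ℝ} (hε : 0 < ε) (a b : E) :
    ‖a + b‖ ^ 2 ≤ (1 + ε) * ‖a‖ ^ 2 + (1 + ε⁻¹) * ‖b‖ ^ 2 :=
  calc ‖a + b‖ ^ 2 ≤ (‖a‖ + ‖b‖) ^ 2 := by gcongr; exact norm_add_le a b
    _ = ‖a‖ ^ 2 + 2 * ‖a‖ * ‖b‖ + ‖b‖ ^ 2 := by ring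
    _ ≤ ‖a‖ ^ 2 + (ε * ‖a‖ ^ 2 + ε⁻¹ * ‖b‖ ^ 2) + ‖b‖ ^ 2 := by
      gcongr; exact two_mul_le_add_mul_sq hε
    _ = (1 + ε) * ‖a‖ ^ 2 + (1 + ε⁻¹) * ‖b‖ ^ 2 := by ring

theorem sum_norm_sub_sq_le_young {ι : Type*} (s : Finset ι) {ε : ℝ} (hε : 0 < ε) (a b : ι → E) :
    ∑ i ∈ s, ‖a i - b i‖ ^ 2 ≤
      (1 + ε) * ∑ i ∈ s, ‖a i‖ ^ 2 + (1 + ε⁻¹) * ∑ i ∈ s, ‖b i‖ ^ 2 := by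
  rw [mul_sum, mul_sum, ← sum_add_distrib]
  refine sum_le_sum fun i _ => ?_
  simpa only [sub_eq_add_neg, norm_neg] using norm_add_sq_le_young hε (a i) (-b i)

end Young

theorem sum_norm_mean_sub_sq_le {ι E : Type*} [Fintype ι] [NormedAddCommGroup E]
    [InnerProductSpace ℝ E] (v : ι → E) (c : E) :
    ∑ i, ‖(Fintype.card ι : ℝ)⁻¹ • ∑ j, v j - v i‖ ^ 2 ≤ ∑ i, ‖v i - c‖ ^ 2 := by
  set m := (Fintype.card ι : ℝ)⁻¹ • ∑ j, v j
  have hcentred : ∑ i, (v i - m) = 0 := by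
    rcases isEmpty_or_nonempty ι with hι | hι
    · simp
    · rw [sum_sub_distrib, sum_const, card_univ, ← Nat.cast_smul_eq_nsmul ℝ, smul_smul,
        mul_inv_cancel₀ (by positivity), one_smul, sub_self]
  have hsplit : ∀ i, ‖v i - c‖ ^ 2 = ‖m - v i‖ ^ 2 + 2 * ⟪v i - m, m - c⟫ + ‖m - c‖ ^ 2 := by
    intro i
    rw [← sub_add_sub_cancel (v i) m c, norm_add_sq_real, norm_sub_rev]
  have hpythagoras :
      ∑ i, ‖v i - c‖ ^ 2 = ∑ i, ‖m - v i‖ ^ 2 + Fintype.card ι * ‖m - c‖ ^ 2 := by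
    simp only [hsplit, sum_add_distrib, ← mul_sum, ← sum_inner, hcentred, inner_zero_left,
      mul_zero, add_zero, sum_const, card_univ, nsmul_eq_mul]
  rw [hpythagoras]
  exact le_add_of_nonneg_right (by positivity)

theorem sum_norm_sub_sq_le_of_lipschitz {ι E F : Type*} [SeminormedAddCommGroup E]
    [SeminormedAddCommGroup F] (s : Finset ι) {G : ι → E → F} {L : ℝ}
    (hG : ∀ i x y, ‖G i x - G i y‖ ≤ L * ‖x - y‖) (x : ι → E) (y : E) (c : F) :
    ∑ i ∈ s, ‖G i (x i) - c‖ ^ 2 ≤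
      2 * L ^ 2 * ∑ i ∈ s, ‖y - x i‖ ^ 2 + 2 * ∑ i ∈ s, ‖G i y - c‖ ^ 2 := by
  rw [mul_assoc, mul_sum, mul_sum, mul_sum, ← sum_add_distrib]
  refine sum_le_sum fun i _ => ?_
  have hlip : ‖G i (x i) - G i y‖ ^ 2 ≤ L ^ 2 * ‖y - x i‖ ^ 2 := by
    rw [← mul_pow, norm_sub_rev y]
    exact pow_le_pow_left₀ (norm_nonneg _) (hG i _ _) 2
  calc ‖G i (x i) - c‖ ^ 2 = ‖(G i (x i) - G i y) + (G i y - c)‖ ^ 2 := by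
        rw [sub_add_sub_cancel]
    _ ≤ (1 + 1) * ‖G i (x i) - G i y‖ ^ 2 + (1 + 1⁻¹) * ‖G i y - c‖ ^ 2 :=
        norm_add_sq_le_young one_pos _ _
    _ ≤ 2 * (L ^ 2 * ‖y - x i‖ ^ 2) + 2 * ‖G i y - c‖ ^ 2 := by norm_num; linarith

theorem one_sub_mul_young_weights_le {ρ a b : ℝ} (hρ0 : 0 < ρ) (ha : 0 ≤ a)
    (hb : 0 ≤ b) : (1 - ρ) * ((1 + ρ / 2) * a + (1 + 2 / ρ) * b) ≤ (1 - ρ / 2) * a + 2 / ρ * b := by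
  have hcoeff_a : (1 - ρ) * (1 + ρ / 2) ≤ 1 - ρ / 2 := by nlinarith
  have hcoeff_b : (1 - ρ) * (1 + 2 / ρ) ≤ 2 / ρ := by
    have : (1 - ρ) * (1 + 2 / ρ) = 2 / ρ - (1 + ρ) := by field_simp; ring
    linarith
  grw [mul_add, ← mul_assoc, ← mul_assoc, hcoeff_a, hcoeff_b]

theorem consensus_drift_frobenius_bound_general
    {n d : ℕ}
    (L : ℝ)
    (f : Fin n → EuclideanSpace ℝ (Fin d) → ℝ)
    (hsmooth : ∀ i x y, ‖gradient (f i) x - gradient (f i) y‖ ≤ L * ‖x - y‖)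
    (B : ℝ)
    (hBCD : ∀ x, (n : ℝ)⁻¹ * ∑ i, ‖gradient (f i) x - gradient (avgFun f) x‖ ^ 2 ≤ B ^ 2)
    (ρ : ℝ) (hρ : ρ ∈ Set.Ioc (0:ℝ) 1)
    (η : ℝ)
    (x : Fin n → EuclideanSpace ℝ (Fin d)) :
    (1 - ρ) / n *
        ∑ i, ‖(avgVec x - x i) -
          η • ((n : ℝ)⁻¹ • ∑ j, gradient (f j) (x j) - gradient (f i) (x i))‖ ^ 2
      ≤ (n : ℝ)⁻¹ * ((1 - ρ / 2) + 12 * L ^ 2 * η ^ 2 / ρ) * ∑ i, ‖avgVec x - x i‖ ^ 2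
        + 8 * η ^ 2 * B ^ 2 / ρ := by
  obtain ⟨hρ0, hρ1⟩ := hρ
  set g := fun i => gradient (f i) (x i)
  set c := gradient (avgFun f) (avgVec x)
  set Sa := ∑ i, ‖avgVec x - x i‖ ^ 2
  set D := ∑ i, ‖gradient (f i) (avgVec x) - c‖ ^ 2
  have hyoung := sum_norm_sub_sq_le_young univ (half_pos hρ0) (fun i => avgVec x - x i)
    (fun i => η • ((n : ℝ)⁻¹ • ∑ j, g j - g i))
  simp only [norm_smul, mul_pow, Real.norm_eq_abs, sq_abs, ← mul_sum, inv_div] at hyoung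
  have hdev : ∑ i, ‖(n : ℝ)⁻¹ • ∑ j, g j - g i‖ ^ 2 ≤ 2 * L ^ 2 * Sa + 2 * D := by
    simpa only [Fintype.card_fin] using (sum_norm_mean_sub_sq_le g c).trans
      (sum_norm_sub_sq_le_of_lipschitz univ hsmooth x (avgVec x) c)
  rw [div_eq_inv_mul, mul_assoc]
  grw [hyoung, one_sub_mul_young_weights_le hρ0 (by positivity) (by positivity), hdev]
  calc _ = (n : ℝ)⁻¹ * (1 - ρ / 2 + 4 * L ^ 2 * η ^ 2 / ρ) * Sa
        + 4 * η ^ 2 / ρ * ((n : ℝ)⁻¹ * D) := by ring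
    _ ≤ (n : ℝ)⁻¹ * (1 - ρ / 2 + 12 * L ^ 2 * η ^ 2 / ρ) * Sa + 8 * η ^ 2 / ρ * B ^ 2 := by
        gcongr
        · norm_num
        · norm_num
        · exact hBCD (avgVec x)
    _ = _ := by ring

theorem consensus_drift_frobenius_bound
    {n d : ℕ} (hn : 1 ≤ n) (hd : 1 ≤ d)
    (L : ℝ) (hL : 0 < L)
    (f : Fin n → EuclideanSpace ℝ (Fin d) → ℝ)
    (hdiff : ∀ i, Differentiable ℝ (f i))
    (hsmooth : ∀ i x y, ‖gradient (f i) x - gradient (f i) y‖ ≤ L * ‖x - y‖)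
    (B : ℝ) (hB : 0 ≤ B)
    (hBCD : ∀ x, (n : ℝ)⁻¹ * ∑ i, ‖gradient (f i) x - gradient (avgFun f) x‖ ^ 2 ≤ B ^ 2)
    (ρ : ℝ) (hρ : ρ ∈ Set.Ioc (0:ℝ) 1)
    (η : ℝ) (hη : 0 < η)
    (x : Fin n → EuclideanSpace ℝ (Fin d)) :
    (1 - ρ) / n *
        ∑ i, ‖(avgVec x - x i) -
          η • ((n : ℝ)⁻¹ • ∑ j, gradient (f j) (x j) - gradient (f i) (x i))‖ ^ 2
      ≤ (n : ℝ)⁻¹ * ((1 - ρ / 2) + 12 * L ^ 2 * η ^ 2 / ρ) * ∑ i, ‖avgVec x - x i‖ ^ 2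
        + 8 * η ^ 2 * B ^ 2 / ρ :=
  consensus_drift_frobenius_bound_general L f hsmooth B hBCD ρ hρ η x
end
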